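/- Fix n ∈ ℕ, a finite type V, s : Fin n → V, and k ∈ ℕ. For a bucket labeling β : Fin n → B, let G(β) = { π : Equiv.Perm (Fin n) | ∀ x, β (π x) = β x } with uniform probability measure μ_β; for p : Fin n, v : V let the atom event be A(p,v) = {π ∈ G(β) | s (π p) = v}; for nonempty finite sets ant, cons ⊆ Fin n × V let the basic-implication event be Imp(ant, cons) = {π ∈ G(β) | (∀ (q,w) ∈ ant, s (π q) = w) → (∃ (q,w) ∈ cons, s (π q) = w)}; and define the maximum disclosure D(β, k) as the supremum, over all p : Fin n, v : V, and all families (ant_i, cons_i)_{i<k} of pairs of nonempty finite subsets of Fin n × V, of μ_β[ A(p,v) | ⋂_{i<k} Imp(ant_i, cons_i) ]. If β : Fin n → B and β' : Fin n → B' are labelings such that β refines β' (∀ x y, β x = β y → β' x = β' y, i.e., every bucket of β' is a union of buckets of β), then D(β, k) ≥ D(β', k). (Monotonicity: coarsening the bucketization never increases the maximum disclosure with respect to conjunctions of k basic implications.) -/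

import Mathlib

open MeasureTheory ProbabilityTheory

noncomputable instance (n : ℕ) : MeasurableSpace (Equiv.Perm (Fin n)) := ⊤

/-- The set of bucket-preserving permutations of the labeling `β`. -/
def bucketPreserving {n : ℕ} {B : Type*} (β : Fin n → B) : Set (Equiv.Perm (Fin n)) :=
  {π : Equiv.Perm (Fin n) | ∀ x, β (π x) = β x}

/-- The atom event: person `p` has sensitive value `v`. -/
def atomEvent {n : ℕ} {V : Type*} (s : Fin n → V) (p : Fin n) (v : V) :
    Set (Equiv.Perm (Fin n)) :=
  {π : Equiv.Perm (Fin n) | s (π p) = v}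

/-- The event of a basic implication `(∧ antecedent atoms) → (∨ consequent atoms)`. -/
def impEvent {n : ℕ} {V : Type*} (s : Fin n → V) (ant cons : Finset (Fin n × V)) :
    Set (Equiv.Perm (Fin n)) :=
  {π : Equiv.Perm (Fin n) |
    (∀ pr ∈ ant, s (π pr.1) = pr.2) → ∃ pr ∈ cons, s (π pr.1) = pr.2}

/-- The maximum disclosure of the bucketization `β` with respect to conjunctions of `k`
basic implications: the supremum over atoms `(p, v)` and families of `k` basic
implications of the probability of the atom conditioned on the implications, under the
uniform measure on bucket-preserving permutations. -/
noncomputable def maxDisclosure {n : ℕ} {V B : Type*} (s : Fin n → V) (β : Fin n → B)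
    (k : ℕ) : ENNReal :=
  sSup { r : ENNReal | ∃ (p : Fin n) (v : V) (ant cons : Fin k → Finset (Fin n × V)),
    (∀ i, (ant i).Nonempty) ∧ (∀ i, (cons i).Nonempty) ∧
    r = (uniformOn (bucketPreserving β))[atomEvent s p v |
          ⋂ i : Fin k, impEvent s (ant i) (cons i)] }

section Aux

open scoped Classical

private lemma permMeasurable {n : ℕ} (S : Set (Equiv.Perm (Fin n))) : MeasurableSet S :=
  MeasurableSpace.measurableSet_top

noncomputable instance (n : ℕ) : MeasurableSingletonClass (Equiv.Perm (Fin n)) :=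
  ⟨fun _ => permMeasurable _⟩

private lemma count_eq_card {n : ℕ} (S : Set (Equiv.Perm (Fin n))) :
    Measure.count S = (Nat.card S : ENNReal) := by
  rw [Measure.count_apply_finite S (Set.toFinite S),
    Nat.card_eq_card_finite_toFinset (Set.toFinite S)]

private lemma count_ne_top {n : ℕ} (S : Set (Equiv.Perm (Fin n))) :
    Measure.count S ≠ ⊤ := by
  rw [count_eq_card]; exact ENNReal.natCast_ne_top _

/-- Conditional probability under the uniform measure on a finite nonempty set,
as a ratio of counts. -/
private lemma cond_formula {n : ℕ} (S F A : Set (Equiv.Perm (Fin n))) (hS : S.Nonempty) :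
    (uniformOn S)[A | F] = Measure.count (S ∩ F ∩ A) / Measure.count (S ∩ F) := by
  have hc0 : Measure.count S ≠ 0 := Measure.count_ne_zero hS
  have hctop : Measure.count S ≠ ⊤ := count_ne_top S
  rw [ProbabilityTheory.cond_apply (permMeasurable F), uniformOn,
    ProbabilityTheory.cond_apply (permMeasurable S),
    ProbabilityTheory.cond_apply (permMeasurable S), ← Set.inter_assoc]
  rw [ENNReal.mul_inv (Or.inl (ENNReal.inv_ne_zero.mpr hctop))
    (Or.inl (ENNReal.inv_ne_top.mpr hc0)), inv_inv, div_eq_mul_inv]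
  calc Measure.count S * (Measure.count (S ∩ F))⁻¹ *
        ((Measure.count S)⁻¹ * Measure.count (S ∩ F ∩ A))
      = (Measure.count S * (Measure.count S)⁻¹) *
        (Measure.count (S ∩ F ∩ A) * (Measure.count (S ∩ F))⁻¹) := by ring
    _ = Measure.count (S ∩ F ∩ A) * (Measure.count (S ∩ F))⁻¹ := by
        rw [ENNReal.mul_inv_cancel hc0 hctop, one_mul]

/-- Double counting: summing, over `σ` in a coarse group `K`, the number of `τ` in a
subgroup `H ⊆ K` with `τ * σ` in a set `X ⊆ K`, gives `|H| * |X|`. -/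
private lemma sum_card {n : ℕ} (H K X : Set (Equiv.Perm (Fin n)))
    (hHK : H ⊆ K) (hKdiv : ∀ a ∈ K, ∀ b ∈ K, a⁻¹ * b ∈ K) (hXK : X ⊆ K) :
    ∑ σ ∈ K.toFinset, (H.toFinset.filter (fun τ => τ * σ ∈ X)).card
      = H.toFinset.card * X.toFinset.card := by
  have h1 : ∀ σ : Equiv.Perm (Fin n),
      (H.toFinset.filter (fun τ => τ * σ ∈ X)).card
        = ∑ τ ∈ H.toFinset, if τ * σ ∈ X then 1 else 0 := fun σ =>
    Finset.card_filter _ _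
  simp_rw [h1]
  rw [Finset.sum_comm]
  have h2 : ∀ τ ∈ H.toFinset,
      (∑ σ ∈ K.toFinset, if τ * σ ∈ X then 1 else 0) = X.toFinset.card := by
    intro τ hτ
    rw [← Finset.card_filter]
    refine Finset.card_bij' (fun σ _ => τ * σ) (fun π _ => τ⁻¹ * π) ?_ ?_ ?_ ?_
    · intro σ hσ
      simp only [Finset.mem_filter, Set.mem_toFinset] at hσ ⊢
      exact hσ.2
    · intro π hπ
      simp only [Set.mem_toFinset] at hπ
      simp only [Finset.mem_filter, Set.mem_toFinset]
      constructor
      · exact hKdiv τ (hHK (Set.mem_toFinset.mp hτ)) π (hXK hπ)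
      · simpa [← mul_assoc] using hπ
    · intro σ _; simp [← mul_assoc]
    · intro π _; simp [← mul_assoc]
  rw [Finset.sum_congr rfl h2, Finset.sum_const, smul_eq_mul]

private lemma count_mul_count {n : ℕ} (H K X : Set (Equiv.Perm (Fin n)))
    (hHK : H ⊆ K) (hKdiv : ∀ a ∈ K, ∀ b ∈ K, a⁻¹ * b ∈ K) (hXK : X ⊆ K) :
    Measure.count H * Measure.count X
      = ∑ σ ∈ K.toFinset, Measure.count {τ ∈ H | τ * σ ∈ X} := by
  have hfin : ∀ σ : Equiv.Perm (Fin n), Nat.card {τ ∈ H | τ * σ ∈ X}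
      = (H.toFinset.filter (fun τ => τ * σ ∈ X)).card := by
    intro σ
    rw [Nat.card_eq_card_toFinset]
    exact congrArg Finset.card (by ext τ; simp)
  simp_rw [count_eq_card, hfin]
  rw [Nat.card_eq_card_toFinset H, Nat.card_eq_card_toFinset X]
  exact_mod_cast (sum_card H K X hHK hKdiv hXK).symm

private lemma imp_translate {n : ℕ} {V : Type*} (s : Fin n → V)
    (σ τ : Equiv.Perm (Fin n)) (ant cons : Finset (Fin n × V)) :
    τ * σ ∈ impEvent s ant cons ↔
      τ ∈ impEvent s (ant.image fun pr => (σ pr.1, pr.2))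
        (cons.image fun pr => (σ pr.1, pr.2)) := by
  have hmul : ∀ x, (τ * σ) x = τ (σ x) := fun _ => rfl
  constructor
  · intro h hall
    obtain ⟨pr, hpr, hs⟩ := h (fun pr hpr => by
      have := hall _ (Finset.mem_image_of_mem _ hpr)
      simpa [hmul] using this)
    exact ⟨(σ pr.1, pr.2), Finset.mem_image_of_mem _ hpr, by simpa [hmul] using hs⟩
  · intro h hall
    obtain ⟨pr', hpr', hs⟩ := h (fun pr' hpr' => by
      obtain ⟨pr, hpr, rfl⟩ := Finset.mem_image.mp hpr'
      simpa [hmul] using hall pr hpr)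
    obtain ⟨pr, hpr, rfl⟩ := Finset.mem_image.mp hpr'
    exact ⟨pr, hpr, by simpa [hmul] using hs⟩

end Aux

/-- **Monotonicity (Theorem 4 of the paper).** If `β` refines `β'` (every bucket of `β'`
is a union of buckets of `β`), then the maximum disclosure of `β` with respect to
conjunctions of `k` basic implications is at least that of `β'`: coarsening the
bucketization never increases the maximum disclosure. -/
theorem maxDisclosure_monotone
    (n : ℕ) (V B B' : Type*) (s : Fin n → V) (k : ℕ)
    (β : Fin n → B) (β' : Fin n → B')
    (hrefine : ∀ x y : Fin n, β x = β y → β' x = β' y) :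
    maxDisclosure s β' k ≤ maxDisclosure s β k := by
  classical
  set Gb : Set (Equiv.Perm (Fin n)) := bucketPreserving β with hGbdef
  set Gb' : Set (Equiv.Perm (Fin n)) := bucketPreserving β' with hGbdef'
  have hsub : Gb ⊆ Gb' := fun π hπ x => hrefine _ _ (hπ x)
  have hone : (1 : Equiv.Perm (Fin n)) ∈ Gb := fun x => rfl
  have hone' : (1 : Equiv.Perm (Fin n)) ∈ Gb' := fun x => rfl
  have hdiv : ∀ a ∈ Gb', ∀ b ∈ Gb', a⁻¹ * b ∈ Gb' := by
    intro a ha b hb x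
    have hainv : ∀ z, β' (a⁻¹ z) = β' z := fun z => by
      have h := ha (a⁻¹ z); rw [show a (a⁻¹ z) = z from Equiv.apply_symm_apply a z] at h; exact h.symm
    show β' ((a⁻¹ * b) x) = β' x
    rw [Equiv.Perm.mul_apply]
    exact (hainv (b x)).trans (hb x)
  refine sSup_le ?_
  rintro r ⟨p, v, ant, cons, hant, hcons, rfl⟩
  set c := maxDisclosure s β k with hc
  set A : Set (Equiv.Perm (Fin n)) := atomEvent s p v with hA
  set F : Set (Equiv.Perm (Fin n)) := ⋂ i : Fin k, impEvent s (ant i) (cons i) with hF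
  rw [cond_formula Gb' F A ⟨1, hone'⟩]
  refine ENNReal.div_le_of_le_mul ?_
  have hH0 : Measure.count Gb ≠ 0 := Measure.count_ne_zero ⟨1, hone⟩
  have hHtop : Measure.count Gb ≠ ⊤ := count_ne_top Gb
  rw [← ENNReal.mul_le_mul_iff_right hH0 hHtop,
    count_mul_count Gb Gb' (Gb' ∩ F ∩ A) hsub hdiv (fun τ hτ => hτ.1.1),
    show Measure.count Gb * (c * Measure.count (Gb' ∩ F))
        = c * (Measure.count Gb * Measure.count (Gb' ∩ F)) by ring,
    count_mul_count Gb Gb' (Gb' ∩ F) hsub hdiv (fun τ hτ => hτ.1),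
    Finset.mul_sum]
  refine Finset.sum_le_sum ?_
  intro σ hσ
  have hσ' : σ ∈ Gb' := Set.mem_toFinset.mp hσ
  set antσ : Fin k → Finset (Fin n × V) :=
    fun i => (ant i).image (fun pr => (σ pr.1, pr.2)) with hantσ
  set consσ : Fin k → Finset (Fin n × V) :=
    fun i => (cons i).image (fun pr => (σ pr.1, pr.2)) with hconsσ
  set Fσ : Set (Equiv.Perm (Fin n)) := ⋂ i : Fin k, impEvent s (antσ i) (consσ i) with hFσ
  set Aσ : Set (Equiv.Perm (Fin n)) := atomEvent s (σ p) v with hAσ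
  have hmulmem : ∀ τ ∈ Gb, τ * σ ∈ Gb' := by
    intro τ hτ x
    show β' ((τ * σ) x) = β' x
    rw [Equiv.Perm.mul_apply]
    exact (hrefine _ _ (hτ (σ x))).trans (hσ' x)
  have htransA : ∀ τ : Equiv.Perm (Fin n), τ * σ ∈ A ↔ τ ∈ Aσ := by
    intro τ
    simp [hA, hAσ, atomEvent, Equiv.Perm.mul_apply]
  have htransF : ∀ τ : Equiv.Perm (Fin n), τ * σ ∈ F ↔ τ ∈ Fσ := by
    intro τ
    simp only [hF, hFσ, Set.mem_iInter]
    exact forall_congr' fun i => imp_translate s σ τ (ant i) (cons i)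
  have e1 : {τ ∈ Gb | τ * σ ∈ Gb' ∩ F ∩ A} = Gb ∩ Fσ ∩ Aσ := by
    ext τ
    simp only [Set.mem_setOf_eq, Set.mem_inter_iff]
    constructor
    · rintro ⟨h1, ⟨_, h2⟩, h3⟩
      exact ⟨⟨h1, (htransF τ).1 h2⟩, (htransA τ).1 h3⟩
    · rintro ⟨⟨h1, h2⟩, h3⟩
      exact ⟨h1, ⟨⟨hmulmem τ h1, (htransF τ).2 h2⟩, (htransA τ).2 h3⟩⟩
  have e2 : {τ ∈ Gb | τ * σ ∈ Gb' ∩ F} = Gb ∩ Fσ := by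
    ext τ
    simp only [Set.mem_setOf_eq, Set.mem_inter_iff]
    constructor
    · rintro ⟨h1, _, h2⟩
      exact ⟨h1, (htransF τ).1 h2⟩
    · rintro ⟨h1, h2⟩
      exact ⟨h1, hmulmem τ h1, (htransF τ).2 h2⟩
  rw [e1, e2]
  have hmem : Measure.count (Gb ∩ Fσ ∩ Aσ) / Measure.count (Gb ∩ Fσ) ≤ c := by
    refine le_sSup ?_
    exact ⟨σ p, v, antσ, consσ, fun i => (hant i).image _, fun i => (hcons i).image _,
      (cond_formula Gb Fσ Aσ ⟨1, hone⟩).symm⟩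
  rcases eq_or_ne (Measure.count (Gb ∩ Fσ)) 0 with hb | hb
  · have hz : Measure.count (Gb ∩ Fσ ∩ Aσ) = 0 :=
      measure_mono_null Set.inter_subset_left hb
    simp [hz]
  · calc Measure.count (Gb ∩ Fσ ∩ Aσ)
        = Measure.count (Gb ∩ Fσ ∩ Aσ) / Measure.count (Gb ∩ Fσ) *
          Measure.count (Gb ∩ Fσ) := (ENNReal.div_mul_cancel hb (count_ne_top _)).symm
      _ ≤ c * Measure.count (Gb ∩ Fσ) := mul_le_mul_left hmem _
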